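/- arXiv:2501.15668 — 5 statements merged into one kernel-verified Lean document; each statement's English description precedes it below -/
import Mathlib

section
/- Let (r, z, φ) be a solution on [0, ℓ) of r' = cos φ, z' = sin φ, φ' = -2 cos φ / z - sin φ / r - 2 c₀ with r(0) = 0, and assume r(s) > 0, z(s) ≠ 0 on (0, ℓ). Then for every s ∈ [0, ℓ): r(s)(sin φ(s) + c₀ r(s)) = -2 ∫₀ˢ (r(t) cos² φ(t) / z(t)) dt. -/
open Real Set intervalIntegral MeasureTheory Filter Topology

/-- the first integral of the generating-curve system:
`r s * (sin (φ s) + c₀ r s) = -2 ∫₀ˢ r t cos² (φ t) / z t dt` on `[0, ℓ)`. -/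
theorem stmt2 (c₀ ℓ : ℝ) (hℓ : 0 < ℓ) (r z φ : ℝ → ℝ)
    (hr : ∀ s ∈ Set.Ioo 0 ℓ, HasDerivAt r (Real.cos (φ s)) s)
    (hz : ∀ s ∈ Set.Ioo 0 ℓ, HasDerivAt z (Real.sin (φ s)) s)
    (hφ : ∀ s ∈ Set.Ioo 0 ℓ,
      HasDerivAt φ (-2 * Real.cos (φ s) / z s - Real.sin (φ s) / r s - 2 * c₀) s)
    (hrc : ContinuousOn r (Set.Ico 0 ℓ)) (hzc : ContinuousOn z (Set.Ico 0 ℓ))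
    (hφc : ContinuousOn φ (Set.Ico 0 ℓ))
    (hr0 : r 0 = 0)
    (hrpos : ∀ s ∈ Set.Ioo 0 ℓ, 0 < r s) (hzne : ∀ s ∈ Set.Ioo 0 ℓ, z s ≠ 0) :
    ∀ s ∈ Set.Ico 0 ℓ,
      r s * (Real.sin (φ s) + c₀ * r s)
        = -2 * ∫ t in (0:ℝ)..s, r t * Real.cos (φ t) ^ 2 / z t := by
  set f : ℝ → ℝ := fun t => r t * Real.cos (φ t) ^ 2 / z t with hf
  set g : ℝ → ℝ := fun t => r t * (Real.sin (φ t) + c₀ * r t) with hg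
  -- continuity of g and f
  have hgc : ContinuousOn g (Set.Ico 0 ℓ) :=
    hrc.mul ((Real.continuous_sin.comp_continuousOn hφc).add (continuousOn_const.mul hrc))
  have hfc : ContinuousOn f (Set.Ioo 0 ℓ) := by
    apply ContinuousOn.div
    · exact ((hrc.mono Set.Ioo_subset_Ico_self).mul
        (((Real.continuous_cos.comp_continuousOn (hφc.mono Set.Ioo_subset_Ico_self))).pow 2))
    · exact hzc.mono Set.Ioo_subset_Ico_self
    · exact hzne
  have hg0 : g 0 = 0 := by simp [hg, hr0]
  -- derivative of g
  have hder : ∀ t ∈ Set.Ioo 0 ℓ, HasDerivAt g (-2 * f t) t := by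
    intro t ht
    have hrt : r t ≠ 0 := ne_of_gt (hrpos t ht)
    have hzt : z t ≠ 0 := hzne t ht
    set D := -2 * Real.cos (φ t) / z t - Real.sin (φ t) / r t - 2 * c₀ with hD
    have hsin : HasDerivAt (fun u => Real.sin (φ u)) (Real.cos (φ t) * D) t :=
      (Real.hasDerivAt_sin (φ t)).comp t (hφ t ht)
    have h1 : HasDerivAt g
        (Real.cos (φ t) * (Real.sin (φ t) + c₀ * r t)
          + r t * (Real.cos (φ t) * D + c₀ * Real.cos (φ t))) t :=
      (hr t ht).mul (hsin.add ((hr t ht).const_mul c₀))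
    convert h1 using 1
    simp only [hD, hf]
    field_simp
    ring
  -- z has constant sign on Ioo
  have key0 : ∀ a ∈ Set.Ioo 0 ℓ, ∀ b ∈ Set.Ioo 0 ℓ, z a < 0 → 0 < z b → False := by
    intro a ha b hb hza hzb
    have hsub : Set.uIcc a b ⊆ Set.Ioo 0 ℓ := Set.ordConnected_Ioo.uIcc_subset ha hb
    have hcz : ContinuousOn z (Set.uIcc a b) := hzc.mono (hsub.trans Set.Ioo_subset_Ico_self)
    have h0 : (0:ℝ) ∈ Set.uIcc (z a) (z b) := Set.mem_uIcc.mpr (Or.inl ⟨hza.le, hzb.le⟩)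
    obtain ⟨c, hc, hc0⟩ := intermediate_value_uIcc hcz h0
    exact hzne c (hsub hc) hc0
  have hmem : (ℓ/2) ∈ Set.Ioo 0 ℓ := ⟨by linarith, by linarith⟩
  -- |f| = σ * f on Ioo for a fixed sign σ
  obtain ⟨σ, habs⟩ : ∃ σ : ℝ, ∀ t ∈ Set.Ioo 0 ℓ, |f t| = σ * f t := by
    rcases (hzne _ hmem).lt_or_gt with h | h
    · refine ⟨-1, fun t ht => ?_⟩
      have hzt : z t < 0 := by
        rcases (hzne t ht).lt_or_gt with h' | h'
        · exact h'
        · exact absurd (key0 _ hmem _ ht h h') (fun x => x)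
      have : f t ≤ 0 := div_nonpos_of_nonneg_of_nonpos
        (mul_nonneg (hrpos t ht).le (sq_nonneg _)) hzt.le
      rw [abs_of_nonpos this]; ring
    · refine ⟨1, fun t ht => ?_⟩
      have hzt : 0 < z t := by
        rcases (hzne t ht).lt_or_gt with h' | h'
        · exact absurd (key0 _ ht _ hmem h' h) (fun x => x)
        · exact h'
      have : 0 ≤ f t := div_nonneg (mul_nonneg (hrpos t ht).le (sq_nonneg _)) hzt.le
      rw [abs_of_nonneg this]; ring
  -- main argument
  intro s hs
  rcases eq_or_lt_of_le hs.1 with h0 | hs0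
  · simp [← h0, hr0]
  have hsℓ : s < ℓ := hs.2
  show g s = -2 * ∫ t in (0:ℝ)..s, f t
  -- the approximating sequence
  set a : ℕ → ℝ := fun n => s / (n + 2) with ha
  have ha_pos : ∀ n, 0 < a n := fun n => div_pos hs0 (by positivity)
  have ha_lt : ∀ n, a n < s := by
    intro n
    have hn : (0:ℝ) ≤ n := Nat.cast_nonneg n
    apply div_lt_self hs0
    linarith
  have ha_mem : ∀ n, a n ∈ Set.Ioo 0 ℓ := fun n => ⟨ha_pos n, (ha_lt n).trans hsℓ⟩
  have ha_tend : Tendsto a atTop (𝓝 0) := by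
    apply Filter.Tendsto.div_atTop (tendsto_const_nhds (x := s))
    exact tendsto_atTop_add_const_right atTop 2 tendsto_natCast_atTop_atTop
  have hsub : ∀ n, Set.Icc (a n) s ⊆ Set.Ioo 0 ℓ := by
    intro n x hx
    exact ⟨lt_of_lt_of_le (ha_pos n) hx.1, lt_of_le_of_lt hx.2 hsℓ⟩
  have hsub' : ∀ n, Set.Ioc (a n) s ⊆ Set.Ioo 0 ℓ := fun n =>
    (Set.Ioc_subset_Icc_self).trans (hsub n)
  -- the fundamental relation on [a n, s]
  have hfint : ∀ n, IntervalIntegrable f volume (a n) s := fun n =>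
    (hfc.mono (hsub n)).intervalIntegrable_of_Icc (ha_lt n).le
  have key : ∀ n, g s - g (a n) = -2 * ∫ t in (a n)..s, f t := by
    intro n
    have hint : IntervalIntegrable (fun t => -2 * f t) volume (a n) s :=
      (hfint n).const_mul (-2)
    have := intervalIntegral.integral_eq_sub_of_hasDerivAt (f := g)
      (f' := fun t => -2 * f t) (a := a n) (b := s)
      (fun x hx => hder x (hsub n (by rwa [Set.uIcc_of_le (ha_lt n).le] at hx))) hint
    rw [← this, intervalIntegral.integral_const_mul]
  -- g (a n) → 0
  have hg_tend : Tendsto (fun n => g (a n)) atTop (𝓝 0) := by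
    have hcw : ContinuousWithinAt g (Set.Ico 0 ℓ) 0 := hgc 0 ⟨le_refl 0, hℓ⟩
    rw [← hg0]
    apply hcw.tendsto.comp
    exact tendsto_nhdsWithin_of_tendsto_nhds_of_eventually_within _ ha_tend
      (Eventually.of_forall fun n => ⟨(ha_pos n).le, (ha_lt n).trans hsℓ⟩)
  -- norm integrals bound
  have hBeq : ∀ n, (∫ x in Set.Ioc (a n) s, ‖f x‖) = σ * (g (a n) - g s) / 2 := by
    intro n
    have h1 : (∫ x in Set.Ioc (a n) s, ‖f x‖) = ∫ x in Set.Ioc (a n) s, σ * f x := by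
      apply setIntegral_congr_fun measurableSet_Ioc
      intro x hx
      show ‖f x‖ = σ * f x
      rw [Real.norm_eq_abs, habs x (hsub' n hx)]
    have h2 : (∫ x in Set.Ioc (a n) s, f x) = ∫ t in (a n)..s, f t :=
      (intervalIntegral.integral_of_le (ha_lt n).le).symm
    have h3 := key n
    rw [h1, MeasureTheory.integral_const_mul, h2]
    have hI : (g (a n) - g s) / 2 = ∫ t in (a n)..s, f t := by linarith
    rw [← hI]
    ring
  have hB_tend : Tendsto (fun n => ∫ x in Set.Ioc (a n) s, ‖f x‖) atTop
      (𝓝 (σ * (0 - g s) / 2)) := by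
    simp_rw [hBeq]
    exact ((tendsto_const_nhds.mul (hg_tend.sub tendsto_const_nhds)).div_const 2)
  have hbound : ∀ᶠ n in atTop, (∫ x in Set.Ioc (a n) s, ‖f x‖) ≤ σ * (0 - g s) / 2 + 1 :=
    hB_tend.eventually_le_const (lt_add_one _)
  -- integrability on (0, s]
  have hIoc : IntegrableOn f (Set.Ioc 0 s) :=
    MeasureTheory.integrableOn_Ioc_of_intervalIntegral_norm_bounded_left
      (fun n => (intervalIntegrable_iff_integrableOn_Ioc_of_le (ha_lt n).le).mp (hfint n))
      ha_tend hbound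
  have hFint : IntervalIntegrable f volume 0 s :=
    (intervalIntegrable_iff_integrableOn_Ioc_of_le hs0.le).mpr hIoc
  -- primitive and its continuity at 0
  set F : ℝ → ℝ := fun x => ∫ t in (0:ℝ)..x, f t with hF
  have hFc : ContinuousOn F (Set.uIcc 0 s) :=
    continuousOn_primitive_interval' hFint left_mem_uIcc
  have hF0 : F 0 = 0 := intervalIntegral.integral_same
  have hF_tend : Tendsto (fun n => F (a n)) atTop (𝓝 0) := by
    have hcw : ContinuousWithinAt F (Set.uIcc 0 s) 0 := hFc 0 left_mem_uIcc
    rw [← hF0]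
    apply hcw.tendsto.comp
    refine tendsto_nhdsWithin_of_tendsto_nhds_of_eventually_within _ ha_tend
      (Eventually.of_forall fun n => ?_)
    rw [Set.uIcc_of_le hs0.le]
    exact ⟨(ha_pos n).le, (ha_lt n).le⟩
  -- splitting the integral
  have split : ∀ n, (∫ t in (a n)..s, f t) = F s - F (a n) := by
    intro n
    have h1 : IntervalIntegrable f volume 0 (a n) := by
      apply hFint.mono_set
      rw [Set.uIcc_of_le hs0.le, Set.uIcc_of_le (ha_pos n).le]
      exact Set.Icc_subset_Icc le_rfl (ha_lt n).le
    have := intervalIntegral.integral_add_adjacent_intervals h1 (hfint n)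
    simp only [hF]
    linarith
  -- pass to the limit
  have heq : ∀ n, g (a n) + (-2) * (F s - F (a n)) = g s := by
    intro n
    have h1 := key n
    rw [split n] at h1
    linarith
  have hfinal : Tendsto (fun n => g (a n) + (-2) * (F s - F (a n))) atTop
      (𝓝 (0 + (-2) * (F s - 0))) :=
    hg_tend.add ((tendsto_const_nhds.sub hF_tend).const_mul (-2))
  have : g s = 0 + (-2) * (F s - 0) := by
    refine tendsto_nhds_unique ?_ hfinal
    simp_rw [heq]
    exact tendsto_const_nhds
  rw [this]; ring
end

section
/- Let c₀ > 0, z₀ > 0, and let (r, z, φ) be a solution on [0, ℓ) of r' = cos φ, z' = sin φ, φ' = -2 cos φ / z - sin φ / r - 2 c₀ with r(0) = 0, z(0) = z₀, φ(0) = 0, where z(s) > 0 on [0, ℓ) and r(s) > 0 on (0, ℓ). Then sin φ(s) + c₀ r(s) < 0 for all s ∈ (0, ℓ); in particular r(s) < 1/c₀ for all s ∈ (0, ℓ). -/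
open Real Set

/-- for `c₀ > 0`, `z₀ > 0`, unduloid-type solutions of the
generating-curve system satisfy `sin (φ s) + c₀ r s < 0` on `(0, ℓ)`;
in particular `r s < 1/c₀` there. -/
theorem stmt3 (c₀ z₀ ℓ : ℝ) (hc : 0 < c₀) (hz₀ : 0 < z₀) (hℓ : 0 < ℓ)
    (r z φ : ℝ → ℝ)
    (hr : ∀ s ∈ Set.Ioo 0 ℓ, HasDerivAt r (Real.cos (φ s)) s)
    (hz : ∀ s ∈ Set.Ioo 0 ℓ, HasDerivAt z (Real.sin (φ s)) s)
    (hφ : ∀ s ∈ Set.Ioo 0 ℓ,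
      HasDerivAt φ (-2 * Real.cos (φ s) / z s - Real.sin (φ s) / r s - 2 * c₀) s)
    (hrc : ContinuousOn r (Set.Ico 0 ℓ)) (hzc : ContinuousOn z (Set.Ico 0 ℓ))
    (hφc : ContinuousOn φ (Set.Ico 0 ℓ))
    (hr0 : r 0 = 0) (hz0 : z 0 = z₀) (hφ0 : φ 0 = 0)
    (hzpos : ∀ s ∈ Set.Ico 0 ℓ, 0 < z s)
    (hrpos : ∀ s ∈ Set.Ioo 0 ℓ, 0 < r s) :
    ∀ s ∈ Set.Ioo 0 ℓ, Real.sin (φ s) + c₀ * r s < 0 ∧ r s < 1 / c₀ := by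
  set F : ℝ → ℝ := fun u => r u * (Real.sin (φ u) + c₀ * r u) with hF_def
  -- derivative of F
  have hF : ∀ t ∈ Set.Ioo 0 ℓ,
      HasDerivAt F (-2 * r t * Real.cos (φ t) ^ 2 / z t) t := by
    intro t ht
    have h1 := hr t ht
    have h2 := hφ t ht
    have hrt : r t ≠ 0 := (hrpos t ht).ne'
    have hzt : z t ≠ 0 := (hzpos t ⟨ht.1.le, ht.2⟩).ne'
    have hsin : HasDerivAt (fun u => Real.sin (φ u))
        (Real.cos (φ t) * (-2 * Real.cos (φ t) / z t - Real.sin (φ t) / r t - 2 * c₀)) t :=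
      (Real.hasDerivAt_sin (φ t)).comp t h2
    have hmain := h1.mul (hsin.add (h1.const_mul c₀))
    refine hmain.congr_deriv ?_
    simp only [Pi.add_apply]
    field_simp
    ring
  -- continuity of F
  have hFc : ContinuousOn F (Set.Ico 0 ℓ) :=
    hrc.mul ((Real.continuous_sin.comp_continuousOn hφc).add
      (continuousOn_const.mul hrc))
  have hF0 : F 0 = 0 := by simp [hF_def, hr0]
  intro s hs
  -- find δ on which cos (φ t) > 0
  have hcw : ContinuousWithinAt φ (Set.Ico 0 ℓ) 0 :=
    hφc 0 ⟨le_refl 0, hℓ⟩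
  have hev : ∀ᶠ t in nhdsWithin 0 (Set.Ico 0 ℓ), 0 < Real.cos (φ t) := by
    have : Filter.Tendsto (fun t => Real.cos (φ t)) (nhdsWithin 0 (Set.Ico 0 ℓ))
        (nhds (Real.cos (φ 0))) := (Real.continuous_cos.continuousAt).tendsto.comp hcw
    rw [hφ0, Real.cos_zero] at this
    exact this.eventually (eventually_gt_nhds one_pos)
  rw [eventually_nhdsWithin_iff] at hev
  rcases Metric.eventually_nhds_iff.mp hev with ⟨δ, hδpos, hδ⟩
  -- choose ε
  set ε : ℝ := min (s / 2) (δ / 2) with hε_def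
  have hεpos : 0 < ε := lt_min (by linarith [hs.1]) (by linarith)
  have hεs : ε < s := lt_of_le_of_lt (min_le_left _ _) (by linarith [hs.1])
  have hεδ : ε < δ := lt_of_le_of_lt (min_le_right _ _) (by linarith)
  have hεℓ : ε < ℓ := lt_trans hεs hs.2
  have hsub1 : Set.Icc (0:ℝ) ε ⊆ Set.Ico 0 ℓ := fun x hx => ⟨hx.1, lt_of_le_of_lt hx.2 hεℓ⟩
  have hsub2 : Set.Icc ε s ⊆ Set.Ico 0 ℓ := fun x hx => ⟨le_trans hεpos.le hx.1, lt_of_le_of_lt hx.2 hs.2⟩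
  -- strict decrease on [0, ε]
  have hstrict : StrictAntiOn F (Set.Icc 0 ε) := by
    apply strictAntiOn_of_deriv_neg (convex_Icc 0 ε) (hFc.mono hsub1)
    intro x hx
    rw [interior_Icc] at hx
    have hxI : x ∈ Set.Ioo 0 ℓ := ⟨hx.1, lt_trans hx.2 hεℓ⟩
    rw [(hF x hxI).deriv]
    have hrx := hrpos x hxI
    have hzx := hzpos x ⟨hxI.1.le, hxI.2⟩
    have hcos : 0 < Real.cos (φ x) := by
      apply hδ (by simpa [abs_of_pos hx.1] using lt_trans hx.2 hεδ) ⟨hxI.1.le, hxI.2⟩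
    have h2 : 0 < 2 * r x * Real.cos (φ x) ^ 2 / z x := by positivity
    have h3 : -2 * r x * Real.cos (φ x) ^ 2 / z x
        = -(2 * r x * Real.cos (φ x) ^ 2 / z x) := by ring
    linarith
  -- antitone on [ε, s]
  have hanti : AntitoneOn F (Set.Icc ε s) := by
    apply antitoneOn_of_deriv_nonpos (convex_Icc ε s) (hFc.mono hsub2)
    · intro x hx
      rw [interior_Icc] at hx
      have hxI : x ∈ Set.Ioo 0 ℓ := ⟨lt_trans hεpos hx.1, lt_trans hx.2 hs.2⟩
      exact (hF x hxI).differentiableAt.differentiableWithinAt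
    · intro x hx
      rw [interior_Icc] at hx
      have hxI : x ∈ Set.Ioo 0 ℓ := ⟨lt_trans hεpos hx.1, lt_trans hx.2 hs.2⟩
      rw [(hF x hxI).deriv]
      have hrx := hrpos x hxI
      have hzx := hzpos x ⟨hxI.1.le, hxI.2⟩
      have h2 : 0 ≤ 2 * r x * Real.cos (φ x) ^ 2 / z x := by positivity
      have h3 : -2 * r x * Real.cos (φ x) ^ 2 / z x
          = -(2 * r x * Real.cos (φ x) ^ 2 / z x) := by ring
      linarith
  have hFε : F ε < 0 := by
    have := hstrict (Set.left_mem_Icc.mpr hεpos.le) (Set.right_mem_Icc.mpr hεpos.le) hεpos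
    rwa [hF0] at this
  have hFs : F s ≤ F ε :=
    hanti (Set.left_mem_Icc.mpr hεs.le) (Set.right_mem_Icc.mpr hεs.le) hεs.le
  have hFs0 : F s < 0 := lt_of_le_of_lt hFs hFε
  have hrs := hrpos s hs
  have hkey : Real.sin (φ s) + c₀ * r s < 0 := by
    by_contra h
    push_neg at h
    have : 0 ≤ F s := mul_nonneg hrs.le h
    linarith
  refine ⟨hkey, ?_⟩
  rw [lt_div_iff₀ hc]
  nlinarith [Real.neg_one_le_sin (φ s)]
end

section
/- Let c₀ > 0 and z₀ ∈ (-1/c₀, 0), and let (r, z, φ) be a solution on [0, ℓ) of r' = cos φ, z' = sin φ, φ' = -2 cos φ / z - sin φ / r - 2 c₀ with r(0) = 0, z(0) = z₀, φ(0) = 0 (with φ'(0) = -1/z₀ - c₀ > 0 obtained via L'Hôpital), and suppose r(s) > 0, z(s) < 0 on (0, ℓ). Then φ(s) ∈ [0, π/2) and φ'(s) > 0 for all s ∈ [0, ℓ). In particular, the curve γ(s) = (r(s), z(s)) is a strictly convex graph over both axes. -/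
open Real Set Filter Topology

private lemma ev_left_of_pos {f : ℝ → ℝ} {x d : ℝ} (hf : HasDerivAt f d x) (hd : 0 < d) :
    ∀ᶠ y in 𝓝[<] x, f y < f x := by
  have h : Tendsto (slope f x) (𝓝[<] x) (𝓝 d) :=
    (hasDerivAt_iff_tendsto_slope.1 hf).mono_left
      (nhdsWithin_mono x fun y hy => Set.mem_compl_singleton_iff.mpr (ne_of_lt hy))
  filter_upwards [h.eventually_const_lt hd, self_mem_nhdsWithin] with y hy hyx
  rw [slope_def_field] at hy
  have hyx' : y - x < 0 := sub_neg.2 hyx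
  nlinarith [mul_pos (neg_pos.2 hyx') hy, div_mul_cancel₀ (f y - f x) (ne_of_lt hyx')]

private lemma ev_left_of_neg {f : ℝ → ℝ} {x d : ℝ} (hf : HasDerivAt f d x) (hd : d < 0) :
    ∀ᶠ y in 𝓝[<] x, f x < f y := by
  have h : Tendsto (slope f x) (𝓝[<] x) (𝓝 d) :=
    (hasDerivAt_iff_tendsto_slope.1 hf).mono_left
      (nhdsWithin_mono x fun y hy => Set.mem_compl_singleton_iff.mpr (ne_of_lt hy))
  filter_upwards [h.eventually_lt_const hd, self_mem_nhdsWithin] with y hy hyx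
  rw [slope_def_field] at hy
  have hyx' : y - x < 0 := sub_neg.2 hyx
  nlinarith [mul_pos (neg_pos.2 hyx') (neg_pos.2 hy),
    div_mul_cancel₀ (f y - f x) (ne_of_lt hyx')]

/-- for `c₀ > 0` and `z₀ ∈ (-1/c₀, 0)` (ovaloid-type solutions),
the angle satisfies `φ s ∈ [0, π/2)` and `φ' s > 0` on `[0, ℓ)`; in particular
the generating curve is a strictly convex graph over both axes. -/
theorem stmt4 (c₀ z₀ ℓ : ℝ) (hc : 0 < c₀) (hz₀ : z₀ ∈ Set.Ioo (-1 / c₀) 0)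
    (hℓ : 0 < ℓ) (r z φ : ℝ → ℝ)
    (hr : ∀ s ∈ Set.Ioo 0 ℓ, HasDerivAt r (Real.cos (φ s)) s)
    (hz : ∀ s ∈ Set.Ioo 0 ℓ, HasDerivAt z (Real.sin (φ s)) s)
    (hφ : ∀ s ∈ Set.Ioo 0 ℓ,
      HasDerivAt φ (-2 * Real.cos (φ s) / z s - Real.sin (φ s) / r s - 2 * c₀) s)
    (hrc : ContinuousOn r (Set.Ico 0 ℓ)) (hzc : ContinuousOn z (Set.Ico 0 ℓ))
    (hφc : ContinuousOn φ (Set.Ico 0 ℓ))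
    (hr0 : r 0 = 0) (hz0 : z 0 = z₀) (hφ0 : φ 0 = 0)
    (hφ'0 : HasDerivAt φ (-1 / z₀ - c₀) 0)
    (hrpos : ∀ s ∈ Set.Ioo 0 ℓ, 0 < r s)
    (hzneg : ∀ s ∈ Set.Ioo 0 ℓ, z s < 0) :
    ∀ s ∈ Set.Ico 0 ℓ, φ s ∈ Set.Ico 0 (π / 2) ∧ 0 < deriv φ s := by
  have hz₀ne : z₀ ≠ 0 := ne_of_lt hz₀.2
  have hA : 0 < -1 / z₀ - c₀ := by
    have h1 : -1 < z₀ * c₀ := by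
      have := hz₀.1
      rwa [div_lt_iff₀ hc] at this
    have h2 : c₀ < -1 / z₀ := by
      rw [lt_div_iff_of_neg hz₀.2]
      linarith
    linarith
  have h0mem : (0:ℝ) ∈ Set.Ico 0 ℓ := left_mem_Ico.2 hℓ
  have memIoo : Set.Ioo (0:ℝ) ℓ ∈ 𝓝[>] (0:ℝ) := Ioo_mem_nhdsGT hℓ
  have hle : 𝓝[>] (0:ℝ) ≤ 𝓝[Set.Ico 0 ℓ] 0 := by
    rw [← nhdsWithin_Ioo_eq_nhdsGT hℓ]
    exact nhdsWithin_mono 0 Set.Ioo_subset_Ico_self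
  have tφ : Tendsto φ (𝓝[>] (0:ℝ)) (𝓝 0) := by
    have := (hφc 0 h0mem).tendsto
    rw [hφ0] at this
    exact this.mono_left hle
  have tz : Tendsto z (𝓝[>] (0:ℝ)) (𝓝 z₀) := by
    have := (hzc 0 h0mem).tendsto
    rw [hz0] at this
    exact this.mono_left hle
  have tcos : Tendsto (fun s => Real.cos (φ s)) (𝓝[>] (0:ℝ)) (𝓝 1) := by
    have := (Real.continuous_cos.continuousAt (x := (0:ℝ))).tendsto.comp tφ
    simpa [Function.comp_def] using this
  -- slope limit for r at 0⁺
  have hrd : HasDerivWithinAt r 1 (Set.Ici 0) 0 := by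
    apply hasDerivWithinAt_Ici_of_tendsto_deriv (s := Set.Ioo 0 ℓ)
    · exact fun s hs => ((hr s hs).differentiableAt).differentiableWithinAt
    · exact (hrc 0 h0mem).mono Set.Ioo_subset_Ico_self
    · exact memIoo
    · refine Tendsto.congr' ?_ tcos
      filter_upwards [memIoo] with s hs
      exact ((hr s hs).deriv).symm
  have hslr : Tendsto (fun s => r s / s) (𝓝[>] (0:ℝ)) (𝓝 1) := by
    have h := hasDerivWithinAt_iff_tendsto_slope.1 hrd
    rw [Set.Ici_sdiff_left] at h
    refine h.congr fun s => ?_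
    rw [slope_def_field, hr0, sub_zero, sub_zero]
  have hinv : Tendsto (fun s => s / r s) (𝓝[>] (0:ℝ)) (𝓝 1) := by
    have := hslr.inv₀ one_ne_zero
    simpa [inv_div] using this
  -- slope limit for sin ∘ φ at 0
  have hsφ : HasDerivAt (fun s => Real.sin (φ s)) (-1 / z₀ - c₀) 0 := by
    have := hφ'0.sin
    rwa [hφ0, Real.cos_zero, one_mul] at this
  have hsl2 : Tendsto (fun s => Real.sin (φ s) / s) (𝓝[>] (0:ℝ)) (𝓝 (-1 / z₀ - c₀)) := by
    have h := (hasDerivAt_iff_tendsto_slope.1 hsφ).mono_left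
      (nhdsWithin_mono 0 fun y hy => Set.mem_compl_singleton_iff.mpr (ne_of_gt hy))
    refine h.congr fun s => ?_
    rw [slope_def_field, hφ0, Real.sin_zero, sub_zero, sub_zero]
  have hsinr : Tendsto (fun s => Real.sin (φ s) / r s) (𝓝[>] (0:ℝ)) (𝓝 (-1 / z₀ - c₀)) := by
    have h := hsl2.mul hinv
    rw [mul_one] at h
    refine Tendsto.congr' ?_ h
    filter_upwards [memIoo, self_mem_nhdsWithin] with s hs hs0
    have hs0' : (s:ℝ) ≠ 0 := ne_of_gt hs0
    have hrs : r s ≠ 0 := ne_of_gt (hrpos s hs)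
    field_simp
  -- limit of deriv φ at 0⁺
  have tfrac1 : Tendsto (fun s => -2 * Real.cos (φ s) / z s) (𝓝[>] (0:ℝ)) (𝓝 (-2 / z₀)) := by
    have := (Tendsto.mul (tendsto_const_nhds (x := (-2:ℝ)) (f := 𝓝[>] (0:ℝ))) tcos).div tz hz₀ne
    simpa [Pi.div_def] using this
  have tg : Tendsto (deriv φ) (𝓝[>] (0:ℝ)) (𝓝 (-2 / z₀ - (-1 / z₀ - c₀) - 2 * c₀)) := by
    refine Tendsto.congr' ?_ ((tfrac1.sub hsinr).sub tendsto_const_nhds)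
    filter_upwards [memIoo] with s hs
    exact ((hφ s hs).deriv).symm
  have hevpos : ∀ᶠ s in 𝓝[>] (0:ℝ), 0 < deriv φ s := by
    refine tg.eventually_const_lt ?_
    have h : -2 / z₀ - (-1 / z₀ - c₀) - 2 * c₀ = -1 / z₀ - c₀ := by ring
    rw [h]; exact hA
  have hevlt : ∀ᶠ s in 𝓝[>] (0:ℝ), φ s < π / 2 :=
    tφ.eventually_lt_const (by positivity)
  obtain ⟨u, hu0, hsub⟩ := mem_nhdsGT_iff_exists_Ioo_subset.1 (hevpos.and hevlt)
  rw [Set.mem_Ioi] at hu0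
  set B : Set ℝ := {s | s ∈ Set.Ico 0 ℓ ∧ ¬(φ s < π / 2 ∧ 0 < deriv φ s)} with hBdef
  have h0good : φ 0 < π / 2 ∧ 0 < deriv φ 0 := by
    constructor
    · rw [hφ0]; positivity
    · rw [hφ'0.deriv]; exact hA
  have hBlow : ∀ b ∈ B, u ≤ b := by
    intro b hb
    by_contra hub
    push_neg at hub
    rcases eq_or_lt_of_le hb.1.1 with h0 | h0
    · exact hb.2 (h0 ▸ h0good)
    · exact hb.2 ⟨(hsub ⟨h0, hub⟩).2, (hsub ⟨h0, hub⟩).1⟩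
  have hbdd : BddBelow B := ⟨0, fun x hx => hx.1.1⟩
  have hBempty : B = ∅ := by
    by_contra hne
    obtain ⟨b₀, hb₀⟩ := Set.nonempty_iff_ne_empty.2 hne
    set t := sInf B with htdef
    have htle : t ≤ b₀ := csInf_le hbdd hb₀
    have htu : u ≤ t := le_csInf ⟨b₀, hb₀⟩ hBlow
    have ht0 : 0 < t := lt_of_lt_of_le hu0 htu
    have htℓ : t < ℓ := lt_of_le_of_lt htle hb₀.1.2
    have htIoo : t ∈ Set.Ioo 0 ℓ := ⟨ht0, htℓ⟩
    have hgood : ∀ y, 0 < y → y < t → y ∈ Set.Ioo 0 ℓ ∧ φ y < π / 2 ∧ 0 < deriv φ y := by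
      intro y hy0 hyt
      have hyℓ : y < ℓ := hyt.trans htℓ
      have hyB : y ∉ B := fun hyB => absurd (csInf_le hbdd hyB) (not_le.2 hyt)
      refine ⟨⟨hy0, hyℓ⟩, ?_⟩
      by_contra hbad
      exact hyB ⟨⟨hy0.le, hyℓ⟩, hbad⟩
    have hmono : StrictMonoOn φ (Set.Icc 0 t) := by
      apply strictMonoOn_of_deriv_pos (convex_Icc 0 t)
      · exact hφc.mono fun x hx => ⟨hx.1, lt_of_le_of_lt hx.2 htℓ⟩
      · intro x hx
        rw [interior_Icc] at hx
        exact (hgood x hx.1 hx.2).2.2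
    have hφtpos : 0 < φ t := by
      have := hmono (Set.left_mem_Icc.2 ht0.le) (Set.right_mem_Icc.2 ht0.le) ht0
      rwa [hφ0] at this
    have hφct : ContinuousAt φ t := (hφ t htIoo).continuousAt
    have hφtle : φ t ≤ π / 2 := by
      apply le_of_tendsto (hφct.tendsto.mono_left (nhdsWithin_le_nhds (s := Set.Iio t)))
      filter_upwards [Ioo_mem_nhdsLT ht0] with y hy
      exact ((hgood y hy.1 hy.2).2.1).le
    have hd := hφ t htIoo
    have hrt := hrpos t htIoo
    have hzt := hzneg t htIoo
    have heqg : deriv φ =ᶠ[𝓝 t]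
        fun s => -2 * Real.cos (φ s) / z s - Real.sin (φ s) / r s - 2 * c₀ := by
      filter_upwards [isOpen_Ioo.mem_nhds htIoo] with s hs
      exact (hφ s hs).deriv
    by_cases htB : t ∈ B
    · rcases eq_or_lt_of_le hφtle with heq | hlt
      · -- φ t = π/2 : derivative is negative, contradiction with monotonicity
        have hneg : -2 * Real.cos (φ t) / z t - Real.sin (φ t) / r t - 2 * c₀ < 0 := by
          rw [heq, Real.cos_pi_div_two, Real.sin_pi_div_two]
          have h1 : 0 < 1 / r t := by positivity
          simp only [mul_zero, zero_div]
          linarith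
        have hev3 := ev_left_of_neg hd hneg
        obtain ⟨y, hy1, hy2⟩ :=
          (hev3.and (Filter.eventually_of_mem (Ioo_mem_nhdsLT ht0) (fun y (hy : y ∈ Set.Ioo 0 t) => hy))).exists
        have := (hgood y hy2.1 hy2.2).2.1
        rw [heq] at hy1
        linarith
      · -- φ t < π/2 : then deriv φ t = 0 and second derivative argument
        have hderle : deriv φ t ≤ 0 := by
          by_contra h
          push_neg at h
          exact htB.2 ⟨hlt, h⟩
        have hdt : deriv φ t = 0 := by
          rcases lt_or_eq_of_le hderle with hlt' | he
          · exfalso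
            have hd' : HasDerivAt φ (deriv φ t) t := hd.differentiableAt.hasDerivAt
            have hev3 := ev_left_of_neg hd' hlt'
            obtain ⟨y, hy1, hy2⟩ :=
              (hev3.and (Filter.eventually_of_mem (Ioo_mem_nhdsLT ht0) (fun y (hy : y ∈ Set.Ioo 0 t) => hy))).exists
            have := hmono (Set.mem_Icc.2 ⟨hy2.1.le, hy2.2.le⟩)
              (Set.right_mem_Icc.2 ht0.le) hy2.2
            linarith
          · exact he
        have h0 : -2 * Real.cos (φ t) / z t - Real.sin (φ t) / r t - 2 * c₀ = 0 :=
          (hd.deriv).symm.trans hdt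
        have hφdt : HasDerivAt φ 0 t := h0 ▸ hd
        have hnum : HasDerivAt (fun s => -2 * Real.cos (φ s)) (-2 * (-Real.sin (φ t) * 0)) t :=
          hφdt.cos.const_mul (-2)
        have hq1 := hnum.div (hz t htIoo) (ne_of_lt hzt)
        have hq2 := hφdt.sin.div (hr t htIoo) (ne_of_gt hrt)
        have hgd := (hq1.sub hq2).sub_const (2 * c₀)
        have hsin : 0 < Real.sin (φ t) :=
          Real.sin_pos_of_pos_of_lt_pi hφtpos (hlt.trans (by linarith [Real.pi_pos]))
        have hcos : 0 < Real.cos (φ t) :=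
          Real.cos_pos_of_mem_Ioo ⟨by linarith [Real.pi_pos], hlt⟩
        have hEpos : 0 < (-2 * (-Real.sin (φ t) * 0) * z t -
              -2 * Real.cos (φ t) * Real.sin (φ t)) / z t ^ 2 -
            (Real.cos (φ t) * 0 * r t - Real.sin (φ t) * Real.cos (φ t)) / r t ^ 2 := by
          have hz2 : 0 < z t ^ 2 := pow_two_pos_of_ne_zero (ne_of_lt hzt)
          have hr2 : 0 < r t ^ 2 := pow_two_pos_of_ne_zero (ne_of_gt hrt)
          have he : (-2 * (-Real.sin (φ t) * 0) * z t -
                -2 * Real.cos (φ t) * Real.sin (φ t)) / z t ^ 2 -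
              (Real.cos (φ t) * 0 * r t - Real.sin (φ t) * Real.cos (φ t)) / r t ^ 2 =
              2 * (Real.sin (φ t) * Real.cos (φ t)) / z t ^ 2 +
              Real.sin (φ t) * Real.cos (φ t) / r t ^ 2 := by ring
          rw [he]
          have hsc : 0 < Real.sin (φ t) * Real.cos (φ t) := mul_pos hsin hcos
          have := div_pos (by linarith : (0:ℝ) < 2 * (Real.sin (φ t) * Real.cos (φ t))) hz2
          have := div_pos hsc hr2
          linarith
        have hderivd := hgd.congr_of_eventuallyEq heqg
        have hev5 := ev_left_of_pos hderivd hEpos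
        obtain ⟨y, hy1, hy2⟩ :=
          (hev5.and (Filter.eventually_of_mem (Ioo_mem_nhdsLT ht0) (fun y (hy : y ∈ Set.Ioo 0 t) => hy))).exists
        have := (hgood y hy2.1 hy2.2).2.2
        rw [hdt] at hy1
        linarith
    · -- t ∉ B : conditions hold at t, spread to a right neighborhood, contradiction with inf
      have hgt : φ t < π / 2 ∧ 0 < deriv φ t := by
        by_contra hbad
        exact htB ⟨⟨ht0.le, htℓ⟩, hbad⟩
      have hzct : ContinuousAt z t := (hz t htIoo).continuousAt
      have hrct : ContinuousAt r t := (hr t htIoo).continuousAt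
      have hgc : ContinuousAt
          (fun s => -2 * Real.cos (φ s) / z s - Real.sin (φ s) / r s - 2 * c₀) t := by
        have h1 : ContinuousAt (fun s => -2 * Real.cos (φ s)) t :=
          (continuousAt_const.mul (Real.continuous_cos.continuousAt.comp hφct))
        have h2 : ContinuousAt (fun s => Real.sin (φ s)) t :=
          Real.continuous_sin.continuousAt.comp hφct
        exact ((h1.div hzct (ne_of_lt hzt)).sub (h2.div hrct (ne_of_gt hrt))).sub
          continuousAt_const
      have hdc : ContinuousAt (deriv φ) t := hgc.congr heqg.symm
      have hev6 : ∀ᶠ s in 𝓝 t, φ s < π / 2 ∧ 0 < deriv φ s :=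
        (hφct.tendsto.eventually_lt_const hgt.1).and (hdc.tendsto.eventually_const_lt hgt.2)
      obtain ⟨ε, hε, hball⟩ := Metric.eventually_nhds_iff.1 hev6
      have hex : ∃ b ∈ B, b < t + ε := by
        by_contra hno
        push_neg at hno
        have := le_csInf ⟨b₀, hb₀⟩ hno
        linarith
      obtain ⟨b, hbB, hbε⟩ := hex
      have hbt : t ≤ b := csInf_le hbdd hbB
      have hdist : dist b t < ε := by
        rw [Real.dist_eq, abs_of_nonneg (by linarith)]
        linarith
      exact hbB.2 (hball hdist)
  have hgoodall : ∀ s ∈ Set.Ico 0 ℓ, φ s < π / 2 ∧ 0 < deriv φ s := by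
    intro s hs
    by_contra hbad
    have : s ∈ B := ⟨hs, hbad⟩
    rw [hBempty] at this
    exact this
  intro s hs
  refine ⟨⟨?_, (hgoodall s hs).1⟩, (hgoodall s hs).2⟩
  rcases eq_or_lt_of_le hs.1 with h0 | h0
  · rw [← h0, hφ0]
  · have hmono : StrictMonoOn φ (Set.Icc 0 s) := by
      apply strictMonoOn_of_deriv_pos (convex_Icc 0 s)
      · exact hφc.mono fun x hx => ⟨hx.1, lt_of_le_of_lt hx.2 hs.2⟩
      · intro x hx
        rw [interior_Icc] at hx
        exact (hgoodall x ⟨hx.1.le, hx.2.trans hs.2⟩).2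
    have := hmono (Set.left_mem_Icc.2 h0.le) (Set.right_mem_Icc.2 h0.le) h0
    rw [hφ0] at this
    exact this.le
end

section
/- Let (r, z, φ) be an analytic solution of r' = cos φ, z' = sin φ, φ' = -2 cos φ / z - sin φ / r - 2 c₀ with r(0) = 0, z(0) = z₀ ≠ 0, φ(0) = 0, and φ'(0) = -1/z₀ - c₀. Then φ''(0) = 0. -/
open Real Set Filter

lemma analyticAt_real_sin (x : ℝ) : AnalyticAt ℝ Real.sin x := by
  have h1 : AnalyticAt ℝ Complex.sin (x : ℂ) :=
    (Complex.differentiable_sin.analyticAt (x : ℂ)).restrictScalars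
  have h2 : AnalyticAt ℝ (fun t : ℝ => (t : ℂ)) x := Complex.ofRealCLM.analyticAt x
  have h4 : AnalyticAt ℝ (fun t : ℝ => (Complex.sin t).re) x :=
    (Complex.reCLM.analyticAt _).comp (h1.comp h2)
  have he : (fun t : ℝ => (Complex.sin t).re) = Real.sin := by
    funext t; exact Complex.sin_ofReal_re t
  rwa [he] at h4

lemma analyticAt_real_cos (x : ℝ) : AnalyticAt ℝ Real.cos x := by
  have h1 : AnalyticAt ℝ Complex.cos (x : ℂ) :=
    (Complex.differentiable_cos.analyticAt (x : ℂ)).restrictScalars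
  have h2 : AnalyticAt ℝ (fun t : ℝ => (t : ℂ)) x := Complex.ofRealCLM.analyticAt x
  have h4 : AnalyticAt ℝ (fun t : ℝ => (Complex.cos t).re) x :=
    (Complex.reCLM.analyticAt _).comp (h1.comp h2)
  have he : (fun t : ℝ => (Complex.cos t).re) = Real.cos := by
    funext t; exact Complex.cos_ofReal_re t
  rwa [he] at h4

/-- for an analytic solution of the generating-curve system with
`r 0 = 0`, `z 0 = z₀ ≠ 0`, `φ 0 = 0` and `φ'(0) = -1/z₀ - c₀`, one has
`φ''(0) = 0`. -/
theorem stmt6 (c₀ z₀ : ℝ) (r z φ : ℝ → ℝ)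
    (han : ∀ s, AnalyticAt ℝ r s ∧ AnalyticAt ℝ z s ∧ AnalyticAt ℝ φ s)
    (hr : ∀ s, HasDerivAt r (Real.cos (φ s)) s)
    (hz : ∀ s, HasDerivAt z (Real.sin (φ s)) s)
    (hne : ∀ᶠ s in nhdsWithin 0 (Set.Ioi 0), r s ≠ 0 ∧ z s ≠ 0)
    (hφ : ∀ᶠ s in nhdsWithin 0 (Set.Ioi 0), HasDerivAt φ
      (-2 * Real.cos (φ s) / z s - Real.sin (φ s) / r s - 2 * c₀) s)
    (hr0 : r 0 = 0) (hz0 : z 0 = z₀) (hz₀ : z₀ ≠ 0) (hφ0 : φ 0 = 0)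
    (hφ'0 : deriv φ 0 = -1 / z₀ - c₀) :
    deriv (deriv φ) 0 = 0 := by
  have hφan : ∀ s, AnalyticAt ℝ φ s := fun s => (han s).2.2
  have hran : ∀ s, AnalyticAt ℝ r s := fun s => (han s).1
  have hzan : ∀ s, AnalyticAt ℝ z s := fun s => (han s).2.1
  have hφnhd : AnalyticOnNhd ℝ φ Set.univ := fun x _ => hφan x
  set p : ℝ → ℝ := deriv φ with hpdef
  have hpan : ∀ s, AnalyticAt ℝ p s := fun s => hφnhd.deriv s (Set.mem_univ s)
  have hpnhd : AnalyticOnNhd ℝ p Set.univ := fun x _ => hpan x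
  have hdpan : ∀ s, AnalyticAt ℝ (deriv p) s := fun s => hpnhd.deriv s (Set.mem_univ s)
  have hdp : ∀ s, HasDerivAt p (deriv p s) s := fun s => (hpan s).differentiableAt.hasDerivAt
  have hdφ : ∀ s, HasDerivAt φ (p s) s := fun s => (hφan s).differentiableAt.hasDerivAt
  -- z ≠ 0 near 0
  have hz00 : z 0 ≠ 0 := by rw [hz0]; exact hz₀
  have hzne : ∀ᶠ s in nhds (0 : ℝ), z s ≠ 0 := (hzan 0).continuousAt.eventually_ne hz00
  -- auxiliary functions
  set A : ℝ → ℝ := fun s => p s + 2 * Real.cos (φ s) / z s + 2 * c₀ with hAdef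
  set B : ℝ → ℝ := fun s =>
    deriv p s + (2 * (-Real.sin (φ s) * p s) * z s - 2 * Real.cos (φ s) * Real.sin (φ s)) / z s ^ 2
    with hBdef
  set F : ℝ → ℝ := fun s => r s * A s + Real.sin (φ s) with hFdef
  have hcosφ : ∀ s, AnalyticAt ℝ (fun t => Real.cos (φ t)) s :=
    fun s => (analyticAt_real_cos (φ s)).comp (hφan s)
  have hsinφ : ∀ s, AnalyticAt ℝ (fun t => Real.sin (φ t)) s :=
    fun s => (analyticAt_real_sin (φ s)).comp (hφan s)
  -- F is analytic at 0
  have hFan : AnalyticAt ℝ F 0 := by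
    apply ((hran 0).mul (((hpan 0).add (((analyticAt_const.mul (hcosφ 0))).div (hzan 0) hz00)).add
      analyticAt_const)).add (hsinφ 0)
  -- F vanishes on the right of 0
  have hF0 : ∀ᶠ s in nhdsWithin 0 (Set.Ioi 0), F s = 0 := by
    filter_upwards [hne, hφ] with s hs hds
    obtain ⟨hrs, hzs⟩ := hs
    have hps : p s = -2 * Real.cos (φ s) / z s - Real.sin (φ s) / r s - 2 * c₀ := hds.deriv
    simp only [hFdef, hAdef, hps]
    field_simp
    ring
  -- hence F vanishes frequently near 0 in the punctured neighborhood
  have hfreq : ∃ᶠ s in nhdsWithin (0 : ℝ) {(0 : ℝ)}ᶜ, F s = 0 := by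
    have hle : nhdsWithin (0 : ℝ) (Set.Ioi 0) ≤ nhdsWithin (0 : ℝ) {(0 : ℝ)}ᶜ :=
      nhdsWithin_mono 0 (fun x hx => ne_of_gt hx)
    exact (hF0.frequently).filter_mono hle
  -- identity theorem: F vanishes on a full neighborhood of 0
  have hFz : ∀ᶠ s in nhds (0 : ℝ), F s = 0 := by
    rcases hFan.eventually_eq_zero_or_eventually_ne_zero with h | h
    · exact h
    · exact absurd ((hfreq.and_eventually h).exists) (by rintro ⟨s, h1, h2⟩; exact h2 h1)
  -- derivative of A
  have hA : ∀ᶠ s in nhds (0 : ℝ), HasDerivAt A (B s) s := by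
    filter_upwards [hzne] with s hzs
    have h1 : HasDerivAt (fun t => Real.cos (φ t)) (-Real.sin (φ s) * p s) s :=
      (Real.hasDerivAt_cos (φ s)).comp s (hdφ s)
    have h2 : HasDerivAt (fun t => 2 * Real.cos (φ t)) (2 * (-Real.sin (φ s) * p s)) s :=
      h1.const_mul 2
    have h3 : HasDerivAt (fun t => 2 * Real.cos (φ t) / z t)
        ((2 * (-Real.sin (φ s) * p s) * z s - 2 * Real.cos (φ s) * Real.sin (φ s)) / z s ^ 2) s :=
      h2.div (hz s) hzs
    exact ((hdp s).add h3).add_const (2 * c₀)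
  -- derivative of F
  set G : ℝ → ℝ := fun s => (Real.cos (φ s) * A s + r s * B s) + Real.cos (φ s) * p s with hGdef
  have hFG : ∀ᶠ s in nhds (0 : ℝ), HasDerivAt F (G s) s := by
    filter_upwards [hA] with s hAs
    have hsin : HasDerivAt (fun t => Real.sin (φ t)) (Real.cos (φ s) * p s) s :=
      (Real.hasDerivAt_sin (φ s)).comp s (hdφ s)
    exact ((hr s).mul hAs).add hsin
  have hderivF : deriv F =ᶠ[nhds (0 : ℝ)] G := hFG.mono fun s hs => hs.deriv
  -- deriv F vanishes near 0
  have hFzz : F =ᶠ[nhds (0 : ℝ)] (fun _ => (0 : ℝ)) := hFz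
  have hdF : deriv F =ᶠ[nhds (0 : ℝ)] deriv (fun _ => (0 : ℝ)) := hFzz.deriv
  have hG0 : G =ᶠ[nhds (0 : ℝ)] (fun _ => (0 : ℝ)) := by
    filter_upwards [hderivF, hdF] with s h1 h2
    rw [← h1, h2, deriv_const]
  have hdG0 : deriv G 0 = 0 := by
    rw [hG0.deriv_eq, deriv_const]
  -- now compute deriv G 0 directly
  have hBan : AnalyticAt ℝ B 0 := by
    apply (hdpan 0).add
    exact (((analyticAt_const.mul (((hsinφ 0).neg).mul (hpan 0))).mul (hzan 0)).sub
      ((analyticAt_const.mul (hcosφ 0)).mul (hsinφ 0))).div ((hzan 0).pow 2) (by positivity)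
  have hdB : HasDerivAt B (deriv B 0) 0 := hBan.differentiableAt.hasDerivAt
  have hdA0 : HasDerivAt A (B 0) 0 := hA.self_of_nhds
  have hcos0 : HasDerivAt (fun t => Real.cos (φ t)) (-Real.sin (φ 0) * p 0) 0 :=
    (Real.hasDerivAt_cos (φ 0)).comp 0 (hdφ 0)
  have hGd : HasDerivAt G
      (((-Real.sin (φ 0) * p 0) * A 0 + Real.cos (φ 0) * B 0) +
        (Real.cos (φ 0) * B 0 + r 0 * deriv B 0) +
        ((-Real.sin (φ 0) * p 0) * p 0 + Real.cos (φ 0) * deriv p 0)) 0 :=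
    ((hcos0.mul hdA0).add ((hr 0).mul hdB)).add (hcos0.mul (hdp 0))
  have hval : deriv G 0 = 3 * deriv p 0 := by
    rw [hGd.deriv]
    have hB0 : B 0 = deriv p 0 := by
      simp [hBdef, hφ0]
    rw [hφ0, hr0, hB0]
    simp
    ring
  rw [hval] at hdG0
  have := hdG0
  linarith
end

section
/- Let c₀ ≠ 0, A ∈ ℝ and φ(r) = arcsin(-2c₀ r log r + A r) for small r > 0. Let γ(s) = (r(s), z(s)) be the arc-length parameterization of the corresponding curve meeting the z-axis at r = 0. Then γ is C¹ but not C² at the point r = 0: the tangent has limit (1, 0) (the curve meets the z-axis orthogonally), but the second derivative γ'' = (-φ' sin φ, φ' cos φ) satisfies φ'(s) cos φ(s) = (-2c₀ log r(s) - 2c₀ + A) cos φ(s) → ∓∞ (according to the sign of c₀) as r → 0. -/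
open Real Filter Set

open scoped Topology

/-- the arc-length parameterization of the circular biconcave
discoid profile (`sin φ = -2c₀ r log r + A r`, `c₀ ≠ 0`) meeting the `z`-axis at
`r = 0` is `C¹` but not `C²` there: the unit tangent `(cos φ, sin φ)` tends to
`(1, 0)` as `s → 0⁺`, but `φ' cos φ = (-2c₀ log r - 2c₀ + A) cos φ` tends to
`+∞` or `-∞` according to the sign of `c₀`. -/
theorem stmt16 (c₀ A ℓ : ℝ) (hc : c₀ ≠ 0) (hℓ : 0 < ℓ) (r z φ : ℝ → ℝ)
    (hr0 : r 0 = 0) (hrpos : ∀ s ∈ Set.Ioo 0 ℓ, 0 < r s)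
    (hrc : ContinuousOn r (Set.Ico 0 ℓ))
    (hr : ∀ s ∈ Set.Ioo 0 ℓ, HasDerivAt r (Real.cos (φ s)) s)
    (hz : ∀ s ∈ Set.Ioo 0 ℓ, HasDerivAt z (Real.sin (φ s)) s)
    (hsin : ∀ s ∈ Set.Ioo 0 ℓ,
      Real.sin (φ s) = -2 * c₀ * r s * Real.log (r s) + A * r s) :
    Tendsto (fun s => ((Real.cos (φ s), Real.sin (φ s)) : ℝ × ℝ))
      (nhdsWithin 0 (Set.Ioi 0)) (nhds ((1 : ℝ), (0 : ℝ))) ∧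
    (0 < c₀ → Tendsto
      (fun s => (-2 * c₀ * Real.log (r s) - 2 * c₀ + A) * Real.cos (φ s))
      (nhdsWithin 0 (Set.Ioi 0)) atTop) ∧
    (c₀ < 0 → Tendsto
      (fun s => (-2 * c₀ * Real.log (r s) - 2 * c₀ + A) * Real.cos (φ s))
      (nhdsWithin 0 (Set.Ioi 0)) atBot) := by
  have hfil : 𝓝[Set.Ioi (0:ℝ)] 0 = 𝓝[Set.Ioo 0 ℓ] 0 :=
    (nhdsWithin_Ioo_eq_nhdsGT hℓ).symm
  set l := 𝓝[Set.Ioo 0 ℓ] (0:ℝ) with hl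
  have hmem : ∀ᶠ s in l, s ∈ Set.Ioo 0 ℓ := self_mem_nhdsWithin
  -- r tends to 0
  have htr : Tendsto r l (𝓝 0) := by
    have := (hrc 0 ⟨le_rfl, hℓ⟩).mono Set.Ioo_subset_Ico_self
    rw [ContinuousWithinAt, hr0] at this
    exact this
  -- sin φ tends to 0
  have hts : Tendsto (fun s => Real.sin (φ s)) l (𝓝 0) := by
    have hcont : Continuous (fun x : ℝ => -2 * c₀ * (x * Real.log x) + A * x) :=
      ((continuous_const (y := -2*c₀)).mul Real.continuous_mul_log).add
        ((continuous_const (y := A)).mul continuous_id)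
    have hg : Tendsto (fun x : ℝ => -2 * c₀ * (x * Real.log x) + A * x) (𝓝 0) (𝓝 0) := by
      have := hcont.tendsto 0
      simpa using this
    apply (hg.comp htr).congr'
    filter_upwards [hmem] with s hs
    simp [hsin s hs, mul_assoc]
  -- eventually |sin φ| small
  have hsmall : ∀ᶠ s in l, |Real.sin (φ s)| < 1/2 := by
    have := hts.eventually (eventually_abs_sub_lt 0 (by norm_num : (0:ℝ) < 1/2))
    simpa using this
  -- cos² = 1 - sin²
  have hcossq : ∀ s, Real.cos (φ s)^2 = 1 - Real.sin (φ s)^2 := fun s => by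
    rw [Real.cos_sq']
  -- eventually cos φ > 0
  have hpos : ∀ᶠ s in l, 0 < Real.cos (φ s) := by
    rw [hl, nhdsWithin_Ioo_eq_nhdsGT hℓ] at hsmall ⊢
    rw [eventually_nhdsWithin_iff] at hsmall
    obtain ⟨u, hu, hus⟩ := Metric.eventually_nhds_iff.mp hsmall
    set δ := min (u/2) (ℓ/2) with hδ
    have hδpos : 0 < δ := lt_min (by linarith) (by linarith)
    have hδℓ : δ < ℓ := lt_of_le_of_lt (min_le_right _ _) (by linarith)
    have hkey : ∀ s ∈ Set.Ioo (0:ℝ) δ, |Real.sin (φ s)| < 1/2 := by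
      intro s hs
      refine hus ?_ hs.1
      rw [Real.dist_eq, sub_zero, abs_of_pos hs.1]
      exact lt_of_lt_of_le (lt_of_lt_of_le hs.2 (min_le_left _ _)) (by linarith)
    have hbig : ∀ s ∈ Set.Ioo (0:ℝ) δ, 1/2 < |Real.cos (φ s)| := by
      intro s hs
      have h1 := hkey s hs
      nlinarith [hcossq s, abs_nonneg (Real.sin (φ s)), abs_nonneg (Real.cos (φ s)),
        sq_abs (Real.sin (φ s)), sq_abs (Real.cos (φ s))]
    have hIooδ : Set.Ioo (0:ℝ) δ ⊆ Set.Ioo 0 ℓ := Set.Ioo_subset_Ioo le_rfl hδℓ.le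
    -- claim: cos φ > 0 everywhere on Ioo 0 δ
    have hclaim : ∀ s ∈ Set.Ioo (0:ℝ) δ, 0 < Real.cos (φ s) := by
      intro s₀ hs₀
      by_contra hneg
      push_neg at hneg
      have hneg' : Real.cos (φ s₀) < 0 := by
        rcases lt_or_eq_of_le hneg with h | h
        · exact h
        · exfalso; have := hbig s₀ hs₀; rw [h] at this; simp at this; linarith
      -- find t < s₀ with r t < r s₀
      have hrs₀ : 0 < r s₀ := hrpos s₀ (hIooδ hs₀)
      have : ∀ᶠ t in 𝓝[Set.Ioi (0:ℝ)] 0, r t < r s₀ ∧ t ∈ Set.Ioo 0 s₀ := by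
        have htr' : Tendsto r (𝓝[Set.Ioi (0:ℝ)] 0) (𝓝 0) := hfil ▸ htr
        filter_upwards [htr'.eventually (eventually_lt_nhds hrs₀),
          Ioo_mem_nhdsGT_of_mem ⟨le_rfl, hs₀.1⟩] with t h1 h2
        exact ⟨h1, h2⟩
      obtain ⟨t, ht1, ht2⟩ := this.exists
      -- MVT on [t, s₀]
      have htsub : Set.Icc t s₀ ⊆ Set.Ioo 0 ℓ := fun x hx =>
        ⟨lt_of_lt_of_le ht2.1 hx.1, lt_of_le_of_lt hx.2 (hs₀.2.trans hδℓ)⟩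
      obtain ⟨c, hc1, hc2⟩ := exists_hasDerivAt_eq_slope r (fun x => Real.cos (φ x)) ht2.2
        ((hrc.mono (fun x hx => ⟨(htsub hx).1.le, (htsub hx).2⟩)).mono (by simp))
        (fun x hx => hr x (htsub (Set.Ioo_subset_Icc_self hx)))
      have hcpos : 0 < Real.cos (φ c) := by
        rw [hc2]
        apply div_pos (by linarith) (by linarith [ht2.2])
      -- Darboux on [c, s₀]
      have hcs₀ : c < s₀ := hc1.2
      have hsub : Set.Icc c s₀ ⊆ Set.Ioo 0 ℓ := fun x hx =>
        htsub ⟨hc1.1.le.trans hx.1, hx.2⟩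
      obtain ⟨x, hx1, hx2⟩ := exists_hasDerivWithinAt_eq_of_lt_of_gt hcs₀.le
        (fun x hx => (hr x (hsub hx)).hasDerivWithinAt) hcpos hneg'
      have hxδ : x ∈ Set.Ioo (0:ℝ) δ :=
        ⟨lt_trans (lt_trans ht2.1 hc1.1) hx1.1, lt_trans hx1.2 hs₀.2⟩
      have hx2' : Real.cos (φ x) = 0 := hx2
      have := hbig x hxδ
      rw [hx2'] at this
      simp at this; linarith
    filter_upwards [Ioo_mem_nhdsGT_of_mem ⟨le_rfl, hδpos⟩] with s hs
    exact hclaim s hs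
  -- cos φ → 1
  have htc : Tendsto (fun s => Real.cos (φ s)) l (𝓝 1) := by
    have heq : ∀ᶠ s in l, Real.sqrt (1 - Real.sin (φ s)^2) = Real.cos (φ s) := by
      filter_upwards [hpos] with s hs
      rw [← hcossq s, Real.sqrt_sq hs.le]
    have : Tendsto (fun s => Real.sqrt (1 - Real.sin (φ s)^2)) l (𝓝 1) := by
      have h2 : Tendsto (fun s => 1 - Real.sin (φ s)^2) l (𝓝 1) := by
        have := (tendsto_const_nhds (x := (1:ℝ)) (f := l)).sub (hts.pow 2)
        simpa using this
      have := (Real.continuous_sqrt.tendsto 1).comp h2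
      simpa [Function.comp_def] using this
    exact this.congr' heq
  have hlog : Tendsto (fun s => Real.log (r s)) l atBot := by
    apply Real.tendsto_log_nhdsGT_zero.comp
    rw [tendsto_nhdsWithin_iff]
    refine ⟨htr, ?_⟩
    filter_upwards [hmem] with s hs
    exact hrpos s hs
  refine ⟨?_, ?_, ?_⟩
  · rw [hfil]
    exact htc.prodMk_nhds hts
  · intro hcsgn
    rw [hfil]
    have h1 : Tendsto (fun s => -2 * c₀ * Real.log (r s)) l atTop :=
      hlog.const_mul_atBot_of_neg (by linarith)
    have hmain : Tendsto (fun s => -2 * c₀ * Real.log (r s) - 2 * c₀ + A) l atTop :=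
      (tendsto_atTop_add_const_right l (-2 * c₀ + A) h1).congr (fun s => by ring)
    exact hmain.atTop_mul_pos one_pos htc
  · intro hcsgn
    rw [hfil]
    have h1 : Tendsto (fun s => -2 * c₀ * Real.log (r s)) l atBot :=
      hlog.const_mul_atBot (by linarith)
    have hmain : Tendsto (fun s => -2 * c₀ * Real.log (r s) - 2 * c₀ + A) l atBot :=
      (tendsto_atBot_add_const_right l (-2 * c₀ + A) h1).congr (fun s => by ring)
    exact hmain.atBot_mul_pos one_pos htc
end
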